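/- arXiv:1812.08305 — 3 statements merged into one kernel-verified Lean document; each statement's English description precedes it below -/
import Mathlib

section
/- Consider the discounted LQR with noisy dynamics: s_{t+1} = A s_t + B u_t + z_t, s_0 = 0, u_t = −K s_t, z_t i.i.d. zero-mean with identity covariance, discount factor γ ∈ (0,1), and cost C_dyn(K) = E[Σ_{t≥0} γ^t (s_tᵀ Q s_t + u_tᵀ R u_t)]. Let C_init(K) be the undiscounted-with-γ-substitution random-initialization cost E_{s₀}[Σ_{t≥0} γ^t (s_tᵀ Q s_t + u_tᵀ R u_t)] with s_{t+1} = A s_t + B u_t and E[s₀ s₀ᵀ] = I. If K stabilizes the discounted system, then C_dyn(K) = (γ/(1−γ)) C_init(K). -/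
/-!
Write `M = A - B * K` and `W = Q + Kᵀ * R * K`, so that the stage cost is `sᵀ W s` and both
trajectories are driven by `M`. The noiseless one is `s_t = M ^ t s₀`, whose expected cost is
`c_t = tr ((M ^ t)ᵀ W M ^ t)` because `E[s₀ s₀ᵀ] = I`. The noisy one is
`s_t = ∑_{j < t} M ^ (t - 1 - j) z_j`; the noise is white, so the cross terms vanish and its expected
cost is `∑_{j < t} c_j`. Summing, `∑_t γ ^ t ∑_{j < t} c_j` is `γ` times the Cauchy product of the
geometric series with `∑_j γ ^ j c_j`, i.e. `γ / (1 - γ) * C_init`; the Cauchy product formula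
applies because `c_j ≥ 0` makes the second series absolutely convergent.
-/

open MeasureTheory Matrix Finset

section QuadraticForms

variable {α n p : Type*} [CommRing α] [Fintype n] [Fintype p]

lemma mulVec_dotProduct_mulVec_mulVec (N N' : Matrix p n α) (W : Matrix p p α) (u v : n → α) :
    (N *ᵥ u) ⬝ᵥ W *ᵥ (N' *ᵥ v) = u ⬝ᵥ (Nᵀ * W * N') *ᵥ v := by
  rw [← mulVec_mulVec, ← mulVec_mulVec, dotProduct_mulVec u, dotProduct_mulVec (N *ᵥ u),
    ← vecMul_transpose, vecMul_vecMul, dotProduct_mulVec (u ᵥ* Nᵀ), vecMul_vecMul]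

lemma dotProduct_mulVec_add_neg_mulVec_dotProduct (Q : Matrix n n α) (R : Matrix p p α)
    (K : Matrix p n α) (s : n → α) :
    s ⬝ᵥ Q *ᵥ s + (-(K *ᵥ s)) ⬝ᵥ R *ᵥ (-(K *ᵥ s)) = s ⬝ᵥ (Q + Kᵀ * R * K) *ᵥ s := by
  rw [mulVec_neg, neg_dotProduct, dotProduct_neg, neg_neg, mulVec_dotProduct_mulVec_mulVec,
    add_mulVec, dotProduct_add]

lemma mulVec_add_mulVec_neg_mulVec (A : Matrix n n α) (B : Matrix n p α) (K : Matrix p n α)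
    (s : n → α) : A *ᵥ s + B *ᵥ (-(K *ᵥ s)) = (A - B * K) *ᵥ s := by
  rw [sub_mulVec, mulVec_neg, mulVec_mulVec, sub_eq_add_neg]

end QuadraticForms

lemma trace_transpose_mul_mul_nonneg {n p : Type*} [Fintype n] [Fintype p]
    {W : Matrix p p ℝ} (hW : W.PosSemidef) (N : Matrix p n ℝ) : 0 ≤ (Nᵀ * W * N).trace := by
  simpa only [conjTranspose_eq_transpose_of_trivial] using
    (hW.conjTranspose_mul_mul_same N).trace_nonneg

lemma eq_pow_mulVec_add_sum_of_succ {α n : Type*} [Semiring α] [Fintype n] [DecidableEq n]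
    {M : Matrix n n α} {x w : ℕ → n → α} (hx : ∀ t, x (t + 1) = M *ᵥ x t + w t) (t : ℕ) :
    x t = (M ^ t) *ᵥ x 0 + ∑ j ∈ range t, (M ^ (t - 1 - j)) *ᵥ w j := by
  induction t with
  | zero => simp
  | succ t ih =>
    rw [hx, ih, mulVec_add, mulVec_mulVec, ← pow_succ', mulVec_sum, sum_range_succ, add_assoc,
      Nat.add_sub_cancel, Nat.sub_self, pow_zero, one_mulVec]
    congr 2
    refine sum_congr rfl fun j hj => ?_
    rw [mulVec_mulVec, ← pow_succ']
    congr 2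
    have := mem_range.mp hj
    omega

section ClosedLoop

variable {α n p : Type*} [CommRing α] [Fintype n] [Fintype p] [DecidableEq n]
  {A : Matrix n n α} {B : Matrix n p α} {K : Matrix p n α} {x : ℕ → n → α}

lemma eq_pow_mulVec_of_feedback (hx : ∀ t, x (t + 1) = A *ᵥ x t + B *ᵥ (-(K *ᵥ x t)))
    (t : ℕ) : x t = ((A - B * K) ^ t) *ᵥ x 0 := by
  simpa using eq_pow_mulVec_add_sum_of_succ (x := x) (M := A - B * K) (w := 0)
    (fun t => by rw [hx, mulVec_add_mulVec_neg_mulVec, Pi.zero_apply, add_zero]) t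

lemma eq_sum_pow_mulVec_of_feedback {w : ℕ → n → α} (hx0 : x 0 = 0)
    (hx : ∀ t, x (t + 1) = A *ᵥ x t + B *ᵥ (-(K *ᵥ x t)) + w t) (t : ℕ) :
    x t = ∑ j ∈ range t, ((A - B * K) ^ (t - 1 - j)) *ᵥ w j := by
  simpa [hx0] using eq_pow_mulVec_add_sum_of_succ (x := x) (M := A - B * K)
    (fun t => by rw [hx, mulVec_add_mulVec_neg_mulVec]) t

end ClosedLoop

lemma hasSum_pow_mul_sum_range {γ c : ℝ} {f : ℕ → ℝ} (hγ0 : 0 ≤ γ) (hγ1 : γ < 1)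
    (hf : ∀ j, 0 ≤ f j) (h : HasSum (fun j => γ ^ j * f j) c) :
    HasSum (fun t => γ ^ t * ∑ j ∈ range t, f j) (γ / (1 - γ) * c) := by
  have hgeom : Summable fun k => ‖γ ^ k‖ := by
    simpa [abs_of_nonneg hγ0] using summable_geometric_of_lt_one hγ0 hγ1
  have hterm : Summable fun j => ‖γ ^ j * f j‖ :=
    h.summable.congr fun j => (Real.norm_of_nonneg (mul_nonneg (pow_nonneg hγ0 _) (hf j))).symm
  have hcauchy := (hasSum_sum_range_mul_of_summable_norm hgeom hterm).mul_left γ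
  rw [tsum_geometric_of_lt_one hγ0 hγ1, h.tsum_eq, ← mul_assoc, ← div_eq_mul_inv] at hcauchy
  have hconv : ∀ t, γ * ∑ k ∈ range (t + 1), γ ^ k * (γ ^ (t - k) * f (t - k)) =
      γ ^ (t + 1) * ∑ j ∈ range (t + 1), f j := by
    intro t
    rw [← sum_range_reflect f, pow_succ', mul_assoc, mul_sum (a := γ ^ t)]
    congr 1
    refine sum_congr rfl fun k hk => ?_
    rw [← mul_assoc, pow_mul_pow_sub _ (Nat.lt_succ_iff.mp (mem_range.mp hk)),
      Nat.add_sub_cancel]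
  simp_rw [hconv] at hcauchy
  simpa using HasSum.zero_add (f := fun t => γ ^ t * ∑ j ∈ range t, f j) hcauchy

section SecondMoments

variable {Ω n : Type*} [MeasurableSpace Ω] {μ : Measure Ω} [Fintype n]

lemma integrable_mul_apply_of_ae_sum_sq_le [IsFiniteMeasure μ] {u v : Ω → n → ℝ}
    (hu : Measurable u) (hv : Measurable v) {C : ℝ} (hub : ∀ᵐ ω ∂μ, ∑ i, u ω i ^ 2 ≤ C)
    (hvb : ∀ᵐ ω ∂μ, ∑ i, v ω i ^ 2 ≤ C) (a b : n) :
    Integrable (fun ω => u ω a * v ω b) μ := by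
  refine .of_bound ((measurable_pi_apply a).comp hu |>.mul
    ((measurable_pi_apply b).comp hv)).aestronglyMeasurable C ?_
  filter_upwards [hub, hvb] with ω hωu hωv
  have hua : u ω a ^ 2 ≤ C :=
    (single_le_sum (fun i _ => sq_nonneg (u ω i)) (mem_univ a)).trans hωu
  have hvb' : v ω b ^ 2 ≤ C :=
    (single_le_sum (fun i _ => sq_nonneg (v ω i)) (mem_univ b)).trans hωv
  rw [Real.norm_eq_abs, abs_mul]
  nlinarith [two_mul_le_add_sq |u ω a| |v ω b|, sq_abs (u ω a), sq_abs (v ω b)]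

variable {u v : Ω → n → ℝ}

lemma integrable_dotProduct_mulVec (hint : ∀ a b, Integrable (fun ω => u ω a * v ω b) μ)
    (G : Matrix n n ℝ) : Integrable (fun ω => u ω ⬝ᵥ G *ᵥ v ω) μ := by
  simp only [dotProduct, mulVec, mul_sum]
  exact integrable_finsetSum _ fun a _ => integrable_finsetSum _ fun b _ =>
    ((hint a b).const_mul (G a b)).congr (.of_forall fun ω => by ring)

lemma integral_dotProduct_mulVec (hint : ∀ a b, Integrable (fun ω => u ω a * v ω b) μ)
    (G : Matrix n n ℝ) :
    ∫ ω, u ω ⬝ᵥ G *ᵥ v ω ∂μ = ∑ a, ∑ b, G a b * ∫ ω, u ω a * v ω b ∂μ := by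
  have hexpand : ∀ ω, u ω ⬝ᵥ G *ᵥ v ω = ∑ a, ∑ b, G a b * (u ω a * v ω b) := fun ω => by
    simp only [dotProduct, mulVec, mul_sum]
    exact sum_congr rfl fun a _ => sum_congr rfl fun b _ => by ring
  simp_rw [hexpand]
  rw [integral_finsetSum (f := fun a ω => ∑ b, G a b * (u ω a * v ω b)) _
    fun a _ => integrable_finsetSum _ fun b _ => (hint a b).const_mul _]
  refine sum_congr rfl fun a _ => ?_
  rw [integral_finsetSum _ fun b _ => (hint a b).const_mul _]
  simp only [integral_const_mul]

lemma integral_dotProduct_mulVec_of_isotropic [DecidableEq n]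
    (hint : ∀ a b, Integrable (fun ω => u ω a * v ω b) μ) {c : ℝ}
    (hcov : ∀ a b, ∫ ω, u ω a * v ω b ∂μ = if a = b then c else 0) (G : Matrix n n ℝ) :
    ∫ ω, u ω ⬝ᵥ G *ᵥ v ω ∂μ = c * G.trace := by
  simp [integral_dotProduct_mulVec hint, hcov, trace, mul_sum, mul_comm]

end SecondMoments

section WhiteNoise

variable {Ω ι n p : Type*} [MeasurableSpace Ω] {μ : Measure Ω} [DecidableEq n]
  [DecidableEq ι] {z : ι → Ω → n → ℝ}

lemma integral_mul_apply_of_iIndepFun (hmeas : ∀ t, Measurable (z t))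
    (hindep : ProbabilityTheory.iIndepFun z μ) (hmean : ∀ t i, ∫ ω, z t ω i ∂μ = 0)
    (hcov : ∀ t i j, ∫ ω, z t ω i * z t ω j ∂μ = if i = j then 1 else 0) (j k : ι) (a b : n) :
    ∫ ω, z j ω a * z k ω b ∂μ = if a = b then (if j = k then 1 else 0) else 0 := by
  by_cases hjk : j = k
  · subst hjk
    simp [hcov]
  · have hind := (hindep.indepFun hjk).comp (measurable_pi_apply a) (measurable_pi_apply b)
    have hprod := hind.integral_fun_mul_eq_mul_integral
      ((measurable_pi_apply a).comp (hmeas j)).aestronglyMeasurable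
      ((measurable_pi_apply b).comp (hmeas k)).aestronglyMeasurable
    simp only [Function.comp_apply, hmean, mul_zero] at hprod
    simp [hprod, hjk]

variable [Fintype n] [Fintype p]

lemma integral_sum_mulVec_dotProduct_sum_mulVec
    (hint : ∀ j k a b, Integrable (fun ω => z j ω a * z k ω b) μ)
    (hcov : ∀ j k a b, ∫ ω, z j ω a * z k ω b ∂μ = if a = b then (if j = k then 1 else 0) else 0)
    (s : Finset ι) (N : ι → Matrix p n ℝ) (W : Matrix p p ℝ) :
    ∫ ω, (∑ j ∈ s, N j *ᵥ z j ω) ⬝ᵥ W *ᵥ (∑ k ∈ s, N k *ᵥ z k ω) ∂μ =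
      ∑ j ∈ s, ((N j)ᵀ * W * N j).trace := by
  simp_rw [sum_dotProduct, mulVec_sum, dotProduct_sum, mulVec_dotProduct_mulVec_mulVec]
  rw [integral_finsetSum _ fun j _ => integrable_finsetSum _ fun k _ =>
    integrable_dotProduct_mulVec (hint j k) _]
  refine sum_congr rfl fun j hj => ?_
  rw [integral_finsetSum _ fun k _ => integrable_dotProduct_mulVec (hint j k) _]
  simp [integral_dotProduct_mulVec_of_isotropic (hint j _) (hcov j _), hj]

end WhiteNoise

theorem lqr_noisy_dynamics_cost_eq_scaled_random_init_cost_general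
    {n m : ℕ} {Ω : Type*} [MeasurableSpace Ω] (P : Measure Ω) [IsProbabilityMeasure P]
    (A : Matrix (Fin n) (Fin n) ℝ) (B : Matrix (Fin n) (Fin m) ℝ)
    (Q : Matrix (Fin n) (Fin n) ℝ) (R : Matrix (Fin m) (Fin m) ℝ)
    (hQ : Q.PosDef) (hR : R.PosDef)
    (K : Matrix (Fin m) (Fin n) ℝ) (γ : ℝ) (hγ : γ ∈ Set.Ioo (0 : ℝ) 1)
    -- i.i.d. noise with zero mean, identity covariance, bounded a.s.
    (z : ℕ → Ω → (Fin n → ℝ)) (hzmeas : ∀ t, Measurable (z t))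
    (hindep : ProbabilityTheory.iIndepFun z P)
    (hzmean : ∀ t i, ∫ ω, z t ω i ∂P = 0)
    (hzcov : ∀ t i j, ∫ ω, z t ω i * z t ω j ∂P = if i = j then 1 else 0)
    (Cn : ℝ) (hzbdd : ∀ t, ∀ᵐ ω ∂P, ∑ i, (z t ω i) ^ 2 ≤ Cn)
    -- initial-state distribution with zero mean, identity covariance, bounded a.s.
    (ν : Measure (Fin n → ℝ)) [IsProbabilityMeasure ν]
    (hνcov : ∀ i j, ∫ s, s i * s j ∂ν = if i = j then 1 else 0)
    (hνbdd : ∀ᵐ s ∂ν, ∑ i, (s i) ^ 2 ≤ Cn)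
    -- noisy trajectory: s₀ = 0, s_{t+1} = A s_t + B u_t + z_t with u_t = -K s_t
    (sdyn : ℕ → Ω → (Fin n → ℝ))
    (hsdyn0 : ∀ ω, sdyn 0 ω = 0)
    (hsdyn : ∀ t ω, sdyn (t + 1) ω =
      A.mulVec (sdyn t ω) + B.mulVec (-(K.mulVec (sdyn t ω))) + z t ω)
    -- noiseless trajectory from a random initial state
    (sinit : ℕ → (Fin n → ℝ) → (Fin n → ℝ))
    (hsinit0 : ∀ s₀, sinit 0 s₀ = s₀)
    (hsinit : ∀ t s₀, sinit (t + 1) s₀ =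
      A.mulVec (sinit t s₀) + B.mulVec (-(K.mulVec (sinit t s₀))))
    (Cdyn Cinit : ℝ)
    (hCdyn : HasSum (fun t : ℕ => γ ^ t * ∫ ω,
      (sdyn t ω ⬝ᵥ Q.mulVec (sdyn t ω) +
        (-(K.mulVec (sdyn t ω))) ⬝ᵥ R.mulVec (-(K.mulVec (sdyn t ω)))) ∂P) Cdyn)
    (hCinit : HasSum (fun t : ℕ => γ ^ t * ∫ s₀,
      (sinit t s₀ ⬝ᵥ Q.mulVec (sinit t s₀) +
        (-(K.mulVec (sinit t s₀))) ⬝ᵥ R.mulVec (-(K.mulVec (sinit t s₀)))) ∂ν) Cinit) :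
    Cdyn = (γ / (1 - γ)) * Cinit := by
  have hW : (Q + Kᵀ * R * K).PosSemidef := by
    simpa only [conjTranspose_eq_transpose_of_trivial] using
      hQ.posSemidef.add (hR.posSemidef.conjTranspose_mul_mul_same K)
  set c : ℕ → ℝ := fun j => (((A - B * K) ^ j)ᵀ * (Q + Kᵀ * R * K) * (A - B * K) ^ j).trace
  have hinit : ∀ t, ∫ s₀, (sinit t s₀ ⬝ᵥ Q.mulVec (sinit t s₀) +
      (-(K.mulVec (sinit t s₀))) ⬝ᵥ R.mulVec (-(K.mulVec (sinit t s₀)))) ∂ν =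
      c t := fun t => by
    have hsol (s₀) := eq_pow_mulVec_of_feedback (x := (sinit · s₀)) (hsinit · s₀) t
    simp_rw [dotProduct_mulVec_add_neg_mulVec_dotProduct, hsol, hsinit0,
      mulVec_dotProduct_mulVec_mulVec]
    rw [integral_dotProduct_mulVec_of_isotropic (u := fun s => s) (v := fun s => s)
      (integrable_mul_apply_of_ae_sum_sq_le measurable_id measurable_id hνbdd hνbdd) hνcov,
      one_mul]
  have hdyn : ∀ t, ∫ ω, (sdyn t ω ⬝ᵥ Q.mulVec (sdyn t ω) +
      (-(K.mulVec (sdyn t ω))) ⬝ᵥ R.mulVec (-(K.mulVec (sdyn t ω)))) ∂P =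
      ∑ j ∈ range t, c j := fun t => by
    have hsol (ω) := eq_sum_pow_mulVec_of_feedback (x := (sdyn · ω)) (hsdyn0 ω) (hsdyn · ω) t
    simp_rw [dotProduct_mulVec_add_neg_mulVec_dotProduct, hsol]
    rw [integral_sum_mulVec_dotProduct_sum_mulVec
      (fun j k => integrable_mul_apply_of_ae_sum_sq_le (hzmeas j) (hzmeas k) (hzbdd j) (hzbdd k))
      (integral_mul_apply_of_iIndepFun hzmeas hindep hzmean hzcov)]
    exact sum_range_reflect c t
  simp_rw [hdyn] at hCdyn
  simp_rw [hinit] at hCinit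
  exact hCdyn.unique (hasSum_pow_mul_sum_range hγ.1.le hγ.2
    (fun j => trace_transpose_mul_mul_nonneg hW _) hCinit)

/-- For the discounted LQR, the population cost under i.i.d. additive noise
(zero mean, identity covariance, started at `s₀ = 0`) equals `γ/(1−γ)` times the
random-initialization population cost (zero-mean, identity-covariance initial state),
provided `K` stabilizes the discounted system. -/
theorem lqr_noisy_dynamics_cost_eq_scaled_random_init_cost
    {n m : ℕ} {Ω : Type*} [MeasurableSpace Ω] (P : Measure Ω) [IsProbabilityMeasure P]
    (A : Matrix (Fin n) (Fin n) ℝ) (B : Matrix (Fin n) (Fin m) ℝ)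
    (Q : Matrix (Fin n) (Fin n) ℝ) (R : Matrix (Fin m) (Fin m) ℝ)
    (hQ : Q.PosDef) (hR : R.PosDef)
    (K : Matrix (Fin m) (Fin n) ℝ) (γ : ℝ) (hγ : γ ∈ Set.Ioo (0 : ℝ) 1)
    -- i.i.d. noise with zero mean, identity covariance, bounded a.s.
    (z : ℕ → Ω → (Fin n → ℝ)) (hzmeas : ∀ t, Measurable (z t))
    (hindep : ProbabilityTheory.iIndepFun z P)
    (hident : ∀ s t : ℕ, P.map (z s) = P.map (z t))
    (hzmean : ∀ t i, ∫ ω, z t ω i ∂P = 0)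
    (hzcov : ∀ t i j, ∫ ω, z t ω i * z t ω j ∂P = if i = j then 1 else 0)
    (Cn : ℝ) (hzbdd : ∀ t, ∀ᵐ ω ∂P, ∑ i, (z t ω i) ^ 2 ≤ Cn)
    -- initial-state distribution with zero mean, identity covariance, bounded a.s.
    (ν : Measure (Fin n → ℝ)) [IsProbabilityMeasure ν]
    (hνmean : ∀ i, ∫ s, s i ∂ν = 0)
    (hνcov : ∀ i j, ∫ s, s i * s j ∂ν = if i = j then 1 else 0)
    (hνbdd : ∀ᵐ s ∂ν, ∑ i, (s i) ^ 2 ≤ Cn)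
    -- noisy trajectory: s₀ = 0, s_{t+1} = A s_t + B u_t + z_t with u_t = -K s_t
    (sdyn : ℕ → Ω → (Fin n → ℝ))
    (hsdyn0 : ∀ ω, sdyn 0 ω = 0)
    (hsdyn : ∀ t ω, sdyn (t + 1) ω =
      A.mulVec (sdyn t ω) + B.mulVec (-(K.mulVec (sdyn t ω))) + z t ω)
    -- noiseless trajectory from a random initial state
    (sinit : ℕ → (Fin n → ℝ) → (Fin n → ℝ))
    (hsinit0 : ∀ s₀, sinit 0 s₀ = s₀)
    (hsinit : ∀ t s₀, sinit (t + 1) s₀ =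
      A.mulVec (sinit t s₀) + B.mulVec (-(K.mulVec (sinit t s₀))))
    -- K stabilizes the discounted system: powers of √γ(A − BK) decay geometrically
    (hstab : ∃ C : ℝ, ∃ c : ℝ, 0 ≤ c ∧ c < 1 ∧ ∀ k : ℕ, ∀ i j,
      |((Real.sqrt γ • (A - B * K)) ^ k) i j| ≤ C * c ^ k)
    (Cdyn Cinit : ℝ)
    (hCdyn : HasSum (fun t : ℕ => γ ^ t * ∫ ω,
      (sdyn t ω ⬝ᵥ Q.mulVec (sdyn t ω) +
        (-(K.mulVec (sdyn t ω))) ⬝ᵥ R.mulVec (-(K.mulVec (sdyn t ω)))) ∂P) Cdyn)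
    (hCinit : HasSum (fun t : ℕ => γ ^ t * ∫ s₀,
      (sinit t s₀ ⬝ᵥ Q.mulVec (sinit t s₀) +
        (-(K.mulVec (sinit t s₀))) ⬝ᵥ R.mulVec (-(K.mulVec (sinit t s₀)))) ∂ν) Cinit) :
    Cdyn = (γ / (1 - γ)) * Cinit :=
  lqr_noisy_dynamics_cost_eq_scaled_random_init_cost_general P A B Q R hQ hR K γ hγ z hzmeas hindep
    hzmean hzcov Cn hzbdd ν hνcov hνbdd sdyn hsdyn0 hsdyn sinit hsinit0 hsinit Cdyn Cinit hCdyn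
    hCinit
end

section
/- Let G be an n × n matrix and γ ∈ (0,1), with Σ = Σ_{k≥0} γ^k G^k (G^k)ᵀ convergent. Then Σ_{j≥0} γ^j ‖G^j‖_op ≤ (tr Σ)^{1/2} / (1 − √γ). -/
open Matrix

/-- The spectral (ℓ₂-operator) norm of a real square matrix. -/
noncomputable def matrixOpNorm {n : ℕ} (M : Matrix (Fin n) (Fin n) ℝ) : ℝ :=
  ‖(Matrix.toEuclideanCLM (𝕜 := ℝ) M : EuclideanSpace ℝ (Fin n) →L[ℝ] EuclideanSpace ℝ (Fin n))‖

lemma trace_mul_transpose_eq {n : ℕ} (M : Matrix (Fin n) (Fin n) ℝ) :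
    (M * Mᵀ).trace = ∑ i, ∑ j, (M i j) ^ 2 := by
  simp [Matrix.trace, Matrix.mul_apply, Matrix.diag, sq]

lemma trace_mul_transpose_nonneg {n : ℕ} (M : Matrix (Fin n) (Fin n) ℝ) :
    0 ≤ (M * Mᵀ).trace := by
  rw [trace_mul_transpose_eq]
  positivity

lemma matrixOpNorm_le_sqrt_trace {n : ℕ} (M : Matrix (Fin n) (Fin n) ℝ) :
    matrixOpNorm M ≤ Real.sqrt ((M * Mᵀ).trace) := by
  apply ContinuousLinearMap.opNorm_le_bound _ (Real.sqrt_nonneg _)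
  intro x
  have hx : ‖x‖ = Real.sqrt (∑ j, (x j) ^ 2) := by
    rw [EuclideanSpace.norm_eq]
    simp [sq_abs, sq]
  have hMx : (Matrix.toEuclideanCLM (𝕜 := ℝ) M) x = fun i => M.mulVec x i := by
    ext i
    rfl
  have hnorm : ‖(Matrix.toEuclideanCLM (𝕜 := ℝ) M) x‖
      = Real.sqrt (∑ i, (M.mulVec x i) ^ 2) := by
    rw [EuclideanSpace.norm_eq]
    congr 1
    refine Finset.sum_congr rfl fun i _ => ?_
    rw [hMx]
    simp [sq_abs, sq]
  rw [hnorm, hx, ← Real.sqrt_mul (trace_mul_transpose_nonneg M),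
    trace_mul_transpose_eq, Finset.sum_mul]
  apply Real.sqrt_le_sqrt
  apply Finset.sum_le_sum
  intro i _
  calc (M.mulVec x i) ^ 2 = (∑ j, M i j * x j) ^ 2 := by
        simp [Matrix.mulVec, dotProduct]
    _ ≤ (∑ j, (M i j) ^ 2) * (∑ j, (x j) ^ 2) :=
        Finset.sum_mul_sq_le_sq_mul_sq Finset.univ _ _

/-- `Σ_j γ^j ‖G^j‖_op ≤ √(tr Σ) / (1 − √γ)` where
`Σ = Σ_k γ^k G^k (G^k)ᵀ`. -/
theorem tsum_discounted_opNorm_powers_le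
    {n : ℕ} (G : Matrix (Fin n) (Fin n) ℝ) (γ : ℝ) (hγ : γ ∈ Set.Ioo (0 : ℝ) 1)
    (Sig : Matrix (Fin n) (Fin n) ℝ)
    (hSig : HasSum (fun k : ℕ => γ ^ k • (G ^ k * (G ^ k)ᵀ)) Sig) :
    ∑' j : ℕ, γ ^ j * matrixOpNorm (G ^ j) ≤
      Real.sqrt Sig.trace / (1 - Real.sqrt γ) := by
  obtain ⟨hγ0, hγ1⟩ := hγ
  set s := Real.sqrt γ with hs_def
  have hs0 : 0 ≤ s := Real.sqrt_nonneg γ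
  have hs1 : s < 1 := by
    rw [hs_def, show (1:ℝ) = Real.sqrt 1 by simp]
    exact Real.sqrt_lt_sqrt hγ0.le hγ1
  have hsq : s ^ 2 = γ := Real.sq_sqrt hγ0.le
  -- trace sum
  have htr : HasSum (fun k : ℕ => γ ^ k * (G ^ k * (G ^ k)ᵀ).trace) Sig.trace := by
    have hcont : Continuous (Matrix.trace : Matrix (Fin n) (Fin n) ℝ → ℝ) := by
      unfold Matrix.trace
      exact continuous_finset_sum _ fun i _ =>
        (continuous_apply i).comp (continuous_apply i)
    have := hSig.map (Matrix.traceAddMonoidHom (Fin n) ℝ) hcont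
    simpa [Function.comp_def, Matrix.transpose_pow, Matrix.trace_smul, smul_eq_mul] using this
  -- termwise trace bound
  have hterm : ∀ j : ℕ, γ ^ j * (G ^ j * (G ^ j)ᵀ).trace ≤ Sig.trace := by
    intro j
    exact le_hasSum htr j fun k _ =>
      mul_nonneg (pow_nonneg hγ0.le k) (trace_mul_transpose_nonneg _)
  -- key bound
  have key : ∀ j : ℕ, γ ^ j * matrixOpNorm (G ^ j) ≤ s ^ j * Real.sqrt Sig.trace := by
    intro j
    have h1 : matrixOpNorm (G ^ j) ≤ Real.sqrt ((G ^ j * (G ^ j)ᵀ).trace) :=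
      matrixOpNorm_le_sqrt_trace _
    have h2 : s ^ j * Real.sqrt ((G ^ j * (G ^ j)ᵀ).trace) ≤ Real.sqrt Sig.trace := by
      have : s ^ j = Real.sqrt (γ ^ j) := by
        rw [← Real.sqrt_sq (pow_nonneg hs0 j)]
        congr 1
        rw [← pow_mul, mul_comm, pow_mul, hsq]
      rw [this, ← Real.sqrt_mul (pow_nonneg hγ0.le j)]
      exact Real.sqrt_le_sqrt (hterm j)
    calc γ ^ j * matrixOpNorm (G ^ j)
        = s ^ j * (s ^ j * matrixOpNorm (G ^ j)) := by
          rw [← mul_assoc]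
          congr 1
          rw [← pow_add, ← two_mul, pow_mul, hsq]
      _ ≤ s ^ j * (s ^ j * Real.sqrt ((G ^ j * (G ^ j)ᵀ).trace)) := by
          gcongr
      _ ≤ s ^ j * Real.sqrt Sig.trace := by
          have := mul_le_mul_of_nonneg_left h2 (pow_nonneg hs0 j)
          linarith [this]
  have hgeom : Summable (fun j : ℕ => s ^ j * Real.sqrt Sig.trace) :=
    (summable_geometric_of_lt_one hs0 hs1).mul_right _
  have hsum1 : Summable (fun j : ℕ => γ ^ j * matrixOpNorm (G ^ j)) :=
    Summable.of_nonneg_of_le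
      (fun j => mul_nonneg (pow_nonneg hγ0.le j) (ContinuousLinearMap.opNorm_nonneg _))
      key hgeom
  calc ∑' j : ℕ, γ ^ j * matrixOpNorm (G ^ j)
      ≤ ∑' j : ℕ, s ^ j * Real.sqrt Sig.trace := Summable.tsum_le_tsum key hsum1 hgeom
    _ = (∑' j : ℕ, s ^ j) * Real.sqrt Sig.trace := by
        rw [tsum_mul_right]
    _ = Real.sqrt Sig.trace / (1 - s) := by
        rw [tsum_geometric_of_lt_one hs0 hs1]
        ring
end

section
/- Let f : ℝ^d → ℝ have global minimum f* and satisfy at every point x: local (φ, ρ)-smoothness and local (λ, ρ)-Lipschitzness. Define κ = min{1/(2φ), ρ/λ}. Then for every x, ‖∇f(x)‖ ≤ (2/κ)·√(f(x) − f*). -/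
/-!
A gradient step of length `κ` from `x` stays within the radius `ρ` (since `‖∇f x‖ ≤ λ` and
`κλ ≤ ρ`), where the mean value inequality with the local smoothness bound gives the descent
estimate `f (x - κ ∇f x) ≤ f x - (κ - φκ²) ‖∇f x‖²`. As `κφ ≤ 1/2` and `f* ≤ f (x - κ ∇f x)`,
this yields `(κ/2) ‖∇f x‖² ≤ f x - f*`.
-/

open Metric Filter Topology InnerProductSpace

section Hilbert

variable {E : Type*} [NormedAddCommGroup E] [InnerProductSpace ℝ E] [CompleteSpace E]
  {f : E → ℝ} {x y : E}

theorem norm_gradient_sub_gradient (f : E → ℝ) (x y : E) :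
    ‖gradient f y - gradient f x‖ = ‖fderiv ℝ f y - fderiv ℝ f x‖ := by
  rw [← toDual_gradient, ← toDual_gradient (f := f) (x := x), ← map_sub,
    LinearIsometryEquiv.norm_map]

theorem norm_gradient_le_of_eventually_abs_sub_le (hf : DifferentiableAt ℝ f x) {lam : ℝ}
    (hlam : 0 ≤ lam) (hlip : ∀ᶠ y in 𝓝 x, |f y - f x| ≤ lam * ‖y - x‖) :
    ‖gradient f x‖ ≤ lam := by
  rw [gradient, LinearIsometryEquiv.norm_map]
  exact hf.hasFDerivAt.le_of_lip' hlam hlip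

theorem sub_sub_inner_gradient_le (hf : ∀ z ∈ segment ℝ x y, DifferentiableAt ℝ f z) {C : ℝ}
    (hC : ∀ z ∈ segment ℝ x y, ‖gradient f z - gradient f x‖ ≤ C) :
    f y - f x - inner ℝ (gradient f x) (y - x) ≤ C * ‖y - x‖ := by
  rw [inner_gradient_left]
  refine (le_abs_self _).trans ?_
  refine (convex_segment x y).norm_image_sub_le_of_norm_hasFDerivWithin_le'
    (fun z hz => (hf z hz).hasFDerivAt.hasFDerivWithinAt) (fun z hz => ?_)
    (left_mem_segment ℝ x y) (right_mem_segment ℝ x y)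
  exact norm_gradient_sub_gradient f x z ▸ hC z hz

theorem apply_sub_smul_gradient_le (hf : Differentiable ℝ f) {φ t : ℝ} (hφ : 0 ≤ φ) (ht : 0 ≤ t)
    (hsmooth : ∀ z, ‖z - x‖ ≤ t * ‖gradient f x‖ →
      ‖gradient f z - gradient f x‖ ≤ φ * ‖z - x‖) :
    f (x - t • gradient f x) ≤ f x - (t - φ * t ^ 2) * ‖gradient f x‖ ^ 2 := by
  set g := gradient f x
  have hstep : ‖x - t • g - x‖ = t * ‖g‖ := by
    rw [sub_sub_cancel_left, norm_neg, norm_smul, Real.norm_of_nonneg ht]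
  have hbound : ∀ z ∈ segment ℝ x (x - t • g), ‖gradient f z - g‖ ≤ φ * (t * ‖g‖) := by
    intro z hz
    have hzx : ‖z - x‖ ≤ ‖x - t • g - x‖ := by
      simpa only [dist_eq_norm, norm_sub_rev x] using
        (le_add_of_nonneg_right dist_nonneg).trans_eq (dist_add_dist_of_mem_segment hz)
    exact (hsmooth z (hzx.trans_eq hstep)).trans
      (mul_le_mul_of_nonneg_left (hzx.trans_eq hstep) hφ)
  have hmvt := sub_sub_inner_gradient_le (fun z _ => hf z) hbound
  rw [hstep, sub_sub_cancel_left, inner_neg_right, inner_smul_right,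
    real_inner_self_eq_norm_sq] at hmvt
  linarith

theorem sq_norm_gradient_le_of_locally_smooth (hf : Differentiable ℝ f) {xstar : E}
    (hmin : ∀ y, f xstar ≤ f y) {φ lam ρ κ : ℝ} (hφ : 0 ≤ φ) (hlam : 0 ≤ lam) (hρ : 0 < ρ)
    (hκ : 0 < κ) (hκφ : κ * φ ≤ 1 / 2) (hκlam : κ * lam ≤ ρ)
    (hsmooth : ∀ x y, ‖y - x‖ ≤ ρ → ‖gradient f y - gradient f x‖ ≤ φ * ‖y - x‖)
    (hlip : ∀ x y, ‖y - x‖ ≤ ρ → |f y - f x| ≤ lam * ‖y - x‖) (x : E) :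
    κ / 2 * ‖gradient f x‖ ^ 2 ≤ f x - f xstar := by
  set g := gradient f x
  have hg : ‖g‖ ≤ lam := by
    refine norm_gradient_le_of_eventually_abs_sub_le (hf x) hlam ?_
    filter_upwards [closedBall_mem_nhds x hρ] with y hy
    exact hlip x y (mem_closedBall_iff_norm.1 hy)
  have hstep_le : κ * ‖g‖ ≤ ρ := (mul_le_mul_of_nonneg_left hg hκ.le).trans hκlam
  have hdescent :=
    apply_sub_smul_gradient_le hf hφ hκ.le fun z hz => hsmooth x z (hz.trans hstep_le)
  have hcoef : κ / 2 ≤ κ - φ * κ ^ 2 := by nlinarith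
  linarith [hmin (x - κ • g), mul_le_mul_of_nonneg_right hcoef (sq_nonneg ‖g‖)]

end Hilbert

/-- If `f` is everywhere `(φ, ρ)`-locally smooth and `(λ, ρ)`-locally
Lipschitz, with global minimum `f*`, then with `κ = min{1/(2φ), ρ/λ}` one has
`‖∇f(x)‖ ≤ √(2/κ)·√(f(x) − f*)` for every `x`. -/
theorem gradient_norm_le_sqrt_suboptimality
    {d : ℕ} (f : EuclideanSpace ℝ (Fin d) → ℝ) (hf : ContDiff ℝ 1 f)
    (xstar : EuclideanSpace ℝ (Fin d)) (hmin : ∀ y, f xstar ≤ f y)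
    (φ lam ρ : ℝ) (hφ : 0 < φ) (hlam : 0 < lam) (hρ : 0 < ρ)
    (hsmooth : ∀ x y, ‖y - x‖ ≤ ρ → ‖gradient f y - gradient f x‖ ≤ φ * ‖y - x‖)
    (hlip : ∀ x y, ‖y - x‖ ≤ ρ → |f y - f x| ≤ lam * ‖y - x‖)
    (κ : ℝ) (hκ : κ = min (1 / (2 * φ)) (ρ / lam)) :
    ∀ x, ‖gradient f x‖ ≤ Real.sqrt (2 / κ) * Real.sqrt (f x - f xstar) := by
  intro x
  have hκpos : 0 < κ := hκ ▸ lt_min (by positivity) (by positivity)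
  have hκφ : κ * φ ≤ 1 / 2 := by
    rw [← le_div_iff₀ hφ, div_div]
    exact hκ ▸ min_le_left _ _
  have hκlam : κ * lam ≤ ρ := by
    rw [← le_div_iff₀ hlam]
    exact hκ ▸ min_le_right _ _
  have hdescent := sq_norm_gradient_le_of_locally_smooth (hf.differentiable one_ne_zero) hmin
    hφ.le hlam.le hρ hκpos hκφ hκlam hsmooth hlip x
  rw [← Real.sqrt_mul (by positivity), Real.le_sqrt (norm_nonneg _)
    (mul_nonneg (by positivity) (sub_nonneg.2 (hmin x))), div_mul_eq_mul_div, le_div_iff₀ hκpos]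
  linarith
end
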